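/- Let X be a compact metric space and let φ₁, …, φ_k : X → X be pairwise commuting CSLI maps, giving an action of the semigroup (ℤ⁺)^k on X by φ_m = φ₁^{m₁} ∘ ⋯ ∘ φ_k^{m_k} for m = (m₁, …, m_k) ∈ (ℤ⁺)^k. Then this action is admissible (i.e., admits a semigroup cocycle ω : (ℤ⁺)^k × X → ℝ) if and only if there exist cocycles ω_i for each φ_i (i = 1, …, k) such that for all i, j ∈ {1, …, k} and all x ∈ X: ω_i(x)·ω_j(φ_i(x)) = ω_j(x)·ω_i(φ_j(x)). -/

import Mathlib

/-- A map is locally injective if every point has a neighborhood on which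
the map is injective. -/
def LocallyInjective {X : Type*} [TopologicalSpace X] (φ : X → X) : Prop :=
  ∀ x : X, ∃ U ∈ nhds x, Set.InjOn φ U

/-- A map of a topological space to itself is CSLI if it is continuous,
surjective and locally injective. -/
def CSLI {X : Type*} [TopologicalSpace X] (φ : X → X) : Prop :=
  Continuous φ ∧ Function.Surjective φ ∧ LocallyInjective φ

/-- A cocycle for a map `φ : X → X` is a continuous nonnegative real function `ω`
such that the sum of `ω` over each fiber of `φ` equals `1`. -/
def IsCocycle {X : Type*} [TopologicalSpace X] (φ : X → X) (ω : X → ℝ) : Prop :=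
  Continuous ω ∧ (∀ x : X, 0 ≤ ω x) ∧ ∀ y : X, ∑ᶠ x ∈ φ ⁻¹' {y}, ω x = 1

/-- `φ` is locally open at `x` if there is an open neighborhood `N` of `x` such that
the restriction of `φ` to `N` is an open map of `N` into `X`. -/
def LocallyOpenAt {X : Type*} [TopologicalSpace X] (φ : X → X) (x : X) : Prop :=
  ∃ N : Set X, IsOpen N ∧ x ∈ N ∧ ∀ O ⊆ N, IsOpen O → IsOpen (φ '' O)

/-- The action of `(ℤ⁺)^k` on `X` generated by the maps `φ₁, …, φ_k`:
`actPow φ m = φ₁^[m₁] ∘ ⋯ ∘ φ_k^[m_k]`. -/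
def actPow {X : Type*} {k : ℕ} (φ : Fin k → X → X) (m : Fin k → ℕ) : X → X :=
  (List.finRange k).foldr (fun i f => (φ i)^[m i] ∘ f) id

/-!
Pairs `(f, w)` of a map and a weight form a monoid under `(f, v) * (g, w) = (f ∘ g, w * v ∘ g)`,
and the cocycle identity says exactly that `m ↦ (φ_m, ω_m)` is a monoid homomorphism out of
`(ℤ⁺)^k`. Such a homomorphism is determined by the images `(φ_i, ω_i)` of the generators, which
must commute: that is the compatibility condition. Conversely, commuting generators induce the
homomorphism `m ↦ ∏ (φ_i, ω_i)^{m_i}`, whose values are again cocycles: the fibres of a locally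
injective map of a compact space are finite, and a fibre sum over `f ∘ g` splits into fibre sums
over `f` and over `g`.
-/

section Fibers

variable {X : Type*}

theorem LocallyInjective.finite_preimage_singleton [TopologicalSpace X] [CompactSpace X]
    [T1Space X] {φ : X → X} (hli : LocallyInjective φ) (hc : Continuous φ) (y : X) :
    (φ ⁻¹' {y}).Finite := by
  choose U hU hinj using hli
  obtain ⟨t, hts, hcover⟩ :=
    (isClosed_singleton.preimage hc).isCompact.elim_nhds_subcover U fun x _ => hU x
  refine t.finite_toSet.subset fun z hz => ?_
  obtain ⟨x, hxt, hzx⟩ := Set.mem_iUnion₂.mp (hcover hz)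
  have hx : φ x = y := hts x hxt
  rwa [hinj x hzx (mem_of_mem_nhds (hU x)) (hz.trans hx.symm)]

theorem finsum_mem_preimage_comp_singleton {Y Z R : Type*} [NonUnitalNonAssocSemiring R]
    {f : Y → Z} {g : X → Y} {y : Z} (hf : (f ⁻¹' {y}).Finite) (hg : ∀ z, (g ⁻¹' {z}).Finite)
    (v : Y → R) (w : X → R) :
    ∑ᶠ x ∈ (f ∘ g) ⁻¹' {y}, w x * v (g x) =
      ∑ᶠ z ∈ f ⁻¹' {y}, (∑ᶠ x ∈ g ⁻¹' {z}, w x) * v z := by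
  have hdisj : (f ⁻¹' {y}).PairwiseDisjoint fun z => g ⁻¹' {z} :=
    fun _ _ _ _ hne => (Set.disjoint_singleton.2 hne).preimage g
  rw [Set.preimage_comp, ← Set.biUnion_preimage_singleton, finsum_mem_biUnion hdisj hf
    fun z _ => hg z]
  refine finsum_mem_congr rfl fun z _ => ?_
  rw [finsum_mem_mul' _ _ (hg z)]
  exact finsum_mem_congr rfl fun x hx => by rw [show g x = z from hx]

theorem IsCocycle.comp [TopologicalSpace X] {f g : X → X} {v w : X → ℝ} (hf : IsCocycle f v)
    (hg : IsCocycle g w) (hgc : Continuous g) (hf_fin : ∀ y, (f ⁻¹' {y}).Finite)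
    (hg_fin : ∀ z, (g ⁻¹' {z}).Finite) : IsCocycle (f ∘ g) (w * v ∘ g) := by
  refine ⟨hg.1.mul (hf.1.comp hgc), fun x => mul_nonneg (hg.2.1 x) (hf.2.1 (g x)), fun y => ?_⟩
  simp only [Pi.mul_apply, Function.comp_apply]
  rw [finsum_mem_preimage_comp_singleton (hf_fin y) hg_fin]
  simp only [hg.2.2, one_mul, hf.2.2]

end Fibers

@[ext]
structure WeightedMap (X R : Type*) where
  map : X → X
  weight : X → R

namespace WeightedMap

variable {X R : Type*}

instance [Monoid R] : Monoid (WeightedMap X R) where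
  mul a b := ⟨a.map ∘ b.map, b.weight * a.weight ∘ b.map⟩
  one := ⟨id, 1⟩
  mul_assoc a b c := by
    ext x
    · rfl
    · exact (mul_assoc (c.weight x) (b.weight (c.map x)) (a.weight (b.map (c.map x)))).symm
  one_mul a := by
    ext x
    · rfl
    · exact mul_one _
  mul_one a := by
    ext x
    · rfl
    · exact one_mul _

section Monoid

variable [Monoid R]

@[simp] theorem mul_weight (a b : WeightedMap X R) :
    (a * b).weight = b.weight * a.weight ∘ b.map := rfl

theorem commute_mk {f g : X → X} {v w : X → R} (hfg : f ∘ g = g ∘ f)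
    (hvw : ∀ x, w x * v (g x) = v x * w (f x)) :
    Commute (⟨f, v⟩ : WeightedMap X R) ⟨g, w⟩ := by
  ext x
  · exact congrFun hfg x
  · exact hvw x

def mapHom : WeightedMap X R →* Function.End X where
  toFun a := a.map
  map_one' := rfl
  map_mul' _ _ := rfl

end Monoid

def cocycleSubmonoid (X : Type*) [TopologicalSpace X] : Submonoid (WeightedMap X ℝ) where
  carrier := {a | Continuous a.map ∧ (∀ y, (a.map ⁻¹' {y}).Finite) ∧ IsCocycle a.map a.weight}
  mul_mem' := fun ⟨hfc, hff, hf⟩ ⟨hgc, hgf, hg⟩ =>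
    ⟨hfc.comp hgc, fun y => (hff y).preimage' fun z _ => hgf z, hf.comp hg hgc hff hgf⟩
  one_mem' := ⟨continuous_id, Set.finite_singleton, continuous_const, fun _ => zero_le_one,
    fun _ => finsum_mem_singleton⟩

theorem mem_cocycleSubmonoid [TopologicalSpace X] {a : WeightedMap X ℝ} :
    a ∈ cocycleSubmonoid X ↔
      Continuous a.map ∧ (∀ y, (a.map ⁻¹' {y}).Finite) ∧ IsCocycle a.map a.weight :=
  Iff.rfl

end WeightedMap

section PowersPi

variable {M ι : Type*} [Monoid M] [Fintype ι]

def powersPiHom (g : ι → M) (hg : Pairwise fun i j => Commute (g i) (g j)) :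
    (ι → Multiplicative ℕ) →* M :=
  MonoidHom.noncommPiCoprod (fun i => powersHom M (g i)) (hg.mono fun _ _ h _ _ => h.pow_pow _ _)

theorem powersPiHom_fin {k : ℕ} (g : Fin k → M) (hg : Pairwise fun i j => Commute (g i) (g j))
    (m : Fin k → Multiplicative ℕ) :
    powersPiHom g hg m = (List.ofFn fun i => g i ^ (m i).toAdd).prod := by
  simp only [powersPiHom, MonoidHom.noncommPiCoprod_apply, Finset.noncommProd, Fin.univ_val_map,
    Multiset.noncommProd_coe, powersHom_apply]

variable (g : ι → M) (hg : Pairwise fun i j => Commute (g i) (g j))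

theorem powersPiHom_mulSingle [DecidableEq ι] (i : ι) (n : ℕ) :
    powersPiHom g hg (Pi.mulSingle i (.ofAdd n)) = g i ^ n := by
  rw [powersPiHom, MonoidHom.noncommPiCoprod_mulSingle]
  rfl

theorem map_powersPiHom {N : Type*} [Monoid N] (f : M →* N) (m : ι → Multiplicative ℕ) :
    f (powersPiHom g hg m) = powersPiHom (f ∘ g) (hg.mono fun _ _ h => h.map f) m := by
  classical
  suffices f.comp (powersPiHom g hg) = powersPiHom (f ∘ g) (hg.mono fun _ _ h => h.map f) from
    DFunLike.congr_fun this m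
  refine MonoidHom.pi_ext fun i n => ?_
  rw [MonoidHom.comp_apply, ← ofAdd_toAdd n, powersPiHom_mulSingle, powersPiHom_mulSingle,
    map_pow]
  rfl

theorem powersPiHom_mem {S : Submonoid M} (hS : ∀ i, g i ∈ S) (m : ι → Multiplicative ℕ) :
    powersPiHom g hg m ∈ S := by
  rw [powersPiHom, MonoidHom.noncommPiCoprod_apply]
  exact Submonoid.noncommProd_mem _ _ _ _ fun i _ => pow_mem (hS i) _

end PowersPi

section ActPow

variable {X : Type*} {k : ℕ}

theorem actPow_eq_powersPiHom (φ : Fin k → Function.End X)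
    (hcomm : Pairwise fun i j => Commute (φ i) (φ j)) (m : Fin k → ℕ) :
    actPow φ m = powersPiHom φ hcomm (.ofAdd ∘ m) := by
  rw [powersPiHom_fin, List.ofFn_eq_map]
  unfold actPow
  induction List.finRange k with
  | nil => rfl
  | cons i l ih => simp only [List.foldr_cons, List.map_cons, List.prod_cons, ih]; rfl

theorem actPow_single (φ : Fin k → Function.End X)
    (hcomm : Pairwise fun i j => Commute (φ i) (φ j)) (i : Fin k) :
    actPow φ (Pi.single i 1) = φ i := by
  have : Multiplicative.ofAdd ∘ Pi.single i 1 = Pi.mulSingle i (.ofAdd 1) :=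
    funext fun j => (Pi.mulSingle_multiplicativeOfAdd_eq i 1 j).symm
  rw [actPow_eq_powersPiHom φ hcomm, this, powersPiHom_mulSingle, pow_one]

def IsSemigroupCocycle [TopologicalSpace X] (φ : Fin k → X → X)
    (Ω : (Fin k → ℕ) → X → ℝ) : Prop :=
  (∀ m x, 0 ≤ Ω m x) ∧ (∀ m y, ∑ᶠ x ∈ {x : X | actPow φ m x = y}, Ω m x = 1) ∧
    (∀ m, Continuous (Ω m)) ∧ ∀ m n x, Ω (m + n) x = Ω m x * Ω n (actPow φ m x)

namespace IsSemigroupCocycle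

variable [TopologicalSpace X] {φ : Fin k → X → X} {Ω : (Fin k → ℕ) → X → ℝ}
  (hcomm : ∀ i j, φ i ∘ φ j = φ j ∘ φ i) (hΩ : IsSemigroupCocycle φ Ω)
include hcomm hΩ

theorem isCocycle_single (i : Fin k) : IsCocycle (φ i) (Ω (Pi.single i 1)) := by
  refine ⟨hΩ.2.2.1 _, hΩ.1 _, fun y => ?_⟩
  rw [← actPow_single φ (fun i j _ => hcomm i j) i]
  exact hΩ.2.1 _ y

theorem single_mul_single_comm (i j : Fin k) (x : X) :
    Ω (Pi.single i 1) x * Ω (Pi.single j 1) (φ i x) =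
      Ω (Pi.single j 1) x * Ω (Pi.single i 1) (φ j x) := by
  have hsingle (i) := actPow_single φ (fun i j _ => hcomm i j) i
  have hij := hΩ.2.2.2 (Pi.single i 1) (Pi.single j 1) x
  have hji := hΩ.2.2.2 (Pi.single j 1) (Pi.single i 1) x
  rw [hsingle] at hij hji
  rw [← hij, ← hji, add_comm]

end IsSemigroupCocycle

theorem exists_isSemigroupCocycle [TopologicalSpace X] [CompactSpace X] [T1Space X]
    {φ : Fin k → X → X} (hc : ∀ i, Continuous (φ i)) (hli : ∀ i, LocallyInjective (φ i))
    (hcomm : ∀ i j, φ i ∘ φ j = φ j ∘ φ i) {ω : Fin k → X → ℝ}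
    (hω : ∀ i, IsCocycle (φ i) (ω i))
    (hcompat : ∀ i j x, ω i x * ω j (φ i x) = ω j x * ω i (φ j x)) :
    ∃ Ω, IsSemigroupCocycle φ Ω := by
  let g (i : Fin k) : WeightedMap X ℝ := ⟨φ i, ω i⟩
  have hg : Pairwise fun i j => Commute (g i) (g j) := fun i j _ =>
    WeightedMap.commute_mk (hcomm i j) fun x => (hcompat i j x).symm
  have hgS (i) : g i ∈ WeightedMap.cocycleSubmonoid X :=
    ⟨hc i, (hli i).finite_preimage_singleton (hc i), hω i⟩
  let Ψ (m : Fin k → ℕ) := powersPiHom g hg (.ofAdd ∘ m)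
  have hmap (m) : (Ψ m).map = actPow φ m := by
    rw [actPow_eq_powersPiHom φ fun i j _ => hcomm i j]
    exact map_powersPiHom g hg WeightedMap.mapHom _
  have hΨ (m) : IsCocycle (actPow φ m) (Ψ m).weight :=
    hmap m ▸ (WeightedMap.mem_cocycleSubmonoid.1 (powersPiHom_mem g hg hgS _)).2.2
  refine ⟨fun m => (Ψ m).weight, fun m => (hΨ m).2.1, fun m y => (hΨ m).2.2 y,
    fun m => (hΨ m).1, fun m n x => ?_⟩
  have : Ψ (m + n) = Ψ n * Ψ m := by rw [← map_mul, add_comm]; rfl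
  show (Ψ (m + n)).weight x = (Ψ m).weight x * (Ψ n).weight (actPow φ m x)
  rw [this, WeightedMap.mul_weight, ← hmap]
  rfl

end ActPow

/-- The action of `(ℤ⁺)^k` generated by pairwise commuting CSLI maps `φ₁, …, φ_k`
is admissible (admits a semigroup cocycle) if and only if each `φ_i` admits a
cocycle `ω_i` and the compatibility condition
`ω_i(x)·ω_j(φ_i(x)) = ω_j(x)·ω_i(φ_j(x))` holds for all `i, j, x`. -/
theorem admissible_iff_compatible_cocycles {X : Type*} [MetricSpace X] [CompactSpace X]
    {k : ℕ} (φ : Fin k → X → X) (hφ : ∀ i, CSLI (φ i))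
    (hcomm : ∀ i j, φ i ∘ φ j = φ j ∘ φ i) :
    (∃ ω : (Fin k → ℕ) → X → ℝ,
        (∀ m x, 0 ≤ ω m x) ∧
        (∀ (m : Fin k → ℕ) (y : X), ∑ᶠ x ∈ {x : X | actPow φ m x = y}, ω m x = 1) ∧
        (∀ m, Continuous (ω m)) ∧
        (∀ (m n : Fin k → ℕ) (x : X), ω (m + n) x = ω m x * ω n (actPow φ m x))) ↔
    (∃ ω : Fin k → X → ℝ, (∀ i, IsCocycle (φ i) (ω i)) ∧
        ∀ i j (x : X), ω i x * ω j (φ i x) = ω j x * ω i (φ j x)) := by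
  constructor
  · rintro ⟨Ω, hΩ⟩
    exact ⟨fun i => Ω (Pi.single i 1), IsSemigroupCocycle.isCocycle_single hcomm hΩ,
      IsSemigroupCocycle.single_mul_single_comm hcomm hΩ⟩
  · rintro ⟨ω, hω, hcompat⟩
    exact exists_isSemigroupCocycle (fun i => (hφ i).1) (fun i => (hφ i).2.2) hcomm hω hcompat
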